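/- For the open-chain spin Hamiltonian H_L = −Σ_{j=1}^{L−1}(S⁺_j S⁻_{j+1} + S⁻_j S⁺_{j+1}) − (1/2)Z_1 − Σ_{j=2}^{L−1} Z_j − (1/2)Z_L, both |0⟩ and the W state |W⟩ are eigenvectors with the same eigenvalue −(L−1). -/

import Mathlib

noncomputable section

abbrev QubitSpace (L : ℕ) := EuclideanSpace ℂ (Finset (Fin L))

/-- The all-zeros product state `|0…0⟩`. -/
def zeroState (L : ℕ) : QubitSpace L := WithLp.toLp 2 (fun S => if S = ∅ then 1 else 0)

/-- The W state. -/
def Wstate (L : ℕ) : QubitSpace L :=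
  WithLp.toLp 2 (fun S => if S.card = 1 then ((1 / Real.sqrt L : ℝ) : ℂ) else 0)

/-- Eigenvalue of `Z_j` on the basis state `S`: `-1` if `j ∈ S` (spin `|1⟩`), else `+1`. -/
def zSign {L : ℕ} (j : Fin L) (S : Finset (Fin L)) : ℂ := if j ∈ S then -1 else 1

/-- The open-chain Hamiltonian
`H_L = -Σ_{j=1}^{L-1} (S⁺_j S⁻_{j+1} + S⁻_j S⁺_{j+1}) - ½Z_1 - Σ_{j=2}^{L-1} Z_j - ½Z_L`.
The hopping term `S⁺_j S⁻_{j+1}` moves a 1 from site `j+1` to site `j`. -/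
def Hspin (L : ℕ) (ψ : QubitSpace L) : QubitSpace L :=
  WithLp.toLp 2 <| fun S =>
    -(∑ j ∈ Finset.range (L - 1),
        if h : j + 1 < L then
          (if (⟨j, Nat.lt_of_succ_lt h⟩ : Fin L) ∈ S ∧ (⟨j + 1, h⟩ : Fin L) ∉ S then
              ψ (insert (⟨j + 1, h⟩ : Fin L) (S.erase ⟨j, Nat.lt_of_succ_lt h⟩)) else 0)
          + (if (⟨j + 1, h⟩ : Fin L) ∈ S ∧ (⟨j, Nat.lt_of_succ_lt h⟩ : Fin L) ∉ S then
              ψ (insert (⟨j, Nat.lt_of_succ_lt h⟩ : Fin L) (S.erase ⟨j + 1, h⟩)) else 0)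
        else 0)
    - (∑ j : Fin L,
        (if (j : ℕ) = 0 ∨ (j : ℕ) = L - 1 then (1 / 2 : ℂ) else 1) * zSign j S) * ψ S

/-!
Both hopping and the field conserve the number of 1s. The vacuum `|0⟩` is annihilated by the
hopping and gets field energy `-Σ_j w_j = -(L-1)`, where `w_j` is the field strength at site `j`.
In the one-particle sector, a particle at `k` has field energy `-(L-1) + 2 w_k`, and the halved
boundary fields make `2 w_k` exactly the number of neighbours of `k` in the chain. So there
`H_L + (L-1)` is the graph Laplacian of the path, which annihilates the constant vector `|W⟩`.
-/

def siteWeight (L : ℕ) (j : Fin L) : ℂ :=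
  if (j : ℕ) = 0 ∨ (j : ℕ) = L - 1 then 1 / 2 else 1

/-- The component at `S` of `Σ_j (S⁺_j S⁻_{j+1} + S⁻_j S⁺_{j+1}) ψ`. -/
def hopping (L : ℕ) (ψ : QubitSpace L) (S : Finset (Fin L)) : ℂ :=
  ∑ j ∈ Finset.range (L - 1),
    if h : j + 1 < L then
      (if (⟨j, Nat.lt_of_succ_lt h⟩ : Fin L) ∈ S ∧ (⟨j + 1, h⟩ : Fin L) ∉ S then
          ψ (insert (⟨j + 1, h⟩ : Fin L) (S.erase ⟨j, Nat.lt_of_succ_lt h⟩)) else 0)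
      + (if (⟨j + 1, h⟩ : Fin L) ∈ S ∧ (⟨j, Nat.lt_of_succ_lt h⟩ : Fin L) ∉ S then
          ψ (insert (⟨j, Nat.lt_of_succ_lt h⟩ : Fin L) (S.erase ⟨j + 1, h⟩)) else 0)
    else 0

lemma Hspin_apply (L : ℕ) (ψ : QubitSpace L) (S : Finset (Fin L)) :
    Hspin L ψ S = -hopping L ψ S - (∑ j, siteWeight L j * zSign j S) * ψ S :=
  rfl

lemma two_mul_siteWeight {L : ℕ} (hL : 2 ≤ L) (k : Fin L) :
    2 * siteWeight L k = (if (k : ℕ) < L - 1 then 1 else 0) + (if 0 < (k : ℕ) then 1 else 0) := by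
  have := k.isLt
  unfold siteWeight
  split_ifs <;> first | omega | norm_num

lemma sum_siteWeight {L : ℕ} (hL : 2 ≤ L) : ∑ j, siteWeight L j = (L : ℂ) - 1 := by
  obtain ⟨m, rfl⟩ : ∃ m, L = m + 1 := ⟨L - 1, by omega⟩
  have hright : ∑ k ∈ Finset.range (m + 1), (if k < m then (1 : ℂ) else 0) = m := by
    rw [Finset.sum_range_succ, if_neg (lt_irrefl m), add_zero,
      Finset.sum_congr rfl fun k hk => if_pos (Finset.mem_range.mp hk)]
    simp
  have hleft : ∑ k ∈ Finset.range (m + 1), (if 0 < k then (1 : ℂ) else 0) = m := by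
    rw [Finset.sum_range_succ', if_neg (lt_irrefl 0), add_zero,
      Finset.sum_congr rfl fun k _ => if_pos k.succ_pos]
    simp
  have htwice : 2 * ∑ j, siteWeight (m + 1) j = 2 * m := by
    rw [Finset.mul_sum]
    simp_rw [two_mul_siteWeight hL, Finset.sum_add_distrib]
    rw [Fin.sum_univ_eq_sum_range (fun k => if k < m + 1 - 1 then (1 : ℂ) else 0),
      Fin.sum_univ_eq_sum_range (fun k => if 0 < k then (1 : ℂ) else 0), Nat.add_sub_cancel,
      hright, hleft]
    ring
  push_cast
  linear_combination htwice / 2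

lemma sum_siteWeight_mul_zSign {L : ℕ} (hL : 2 ≤ L) (S : Finset (Fin L)) :
    ∑ j, siteWeight L j * zSign j S = (L : ℂ) - 1 - 2 * ∑ j ∈ S, siteWeight L j := by
  have hsplit (j : Fin L) :
      siteWeight L j * zSign j S = siteWeight L j - 2 * if j ∈ S then siteWeight L j else 0 := by
    unfold zSign; split_ifs <;> ring
  simp_rw [hsplit, Finset.sum_sub_distrib, ← Finset.mul_sum, Finset.sum_ite_mem, Finset.univ_inter,
    sum_siteWeight hL]

lemma hopping_eq_zero {L : ℕ} {ψ : QubitSpace L} {S : Finset (Fin L)}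
    (hψ : ∀ a ∈ S, ∀ b ∉ S, ψ (insert b (S.erase a)) = 0) : hopping L ψ S = 0 := by
  have hhop (a b : Fin L) : (if a ∈ S ∧ b ∉ S then ψ (insert b (S.erase a)) else 0) = 0 := by
    split_ifs with hab
    exacts [hψ a hab.1 b hab.2, rfl]
  simp only [hopping, hhop, add_zero, dite_eq_ite, ite_self, Finset.sum_const_zero]

lemma card_insert_erase {α : Type*} [DecidableEq α] {S : Finset α} {a b : α} (ha : a ∈ S)
    (hb : b ∉ S) : (insert b (S.erase a)).card = S.card := by
  rw [Finset.card_insert_of_notMem fun h => hb (Finset.mem_of_mem_erase h),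
    Finset.card_erase_add_one ha]

lemma hopping_singleton {L : ℕ} {ψ : QubitSpace L} {c : ℂ} (hψ : ∀ m, ψ {m} = c) (k : Fin L) :
    hopping L ψ {k} =
      ((if (k : ℕ) < L - 1 then 1 else 0) + (if 0 < (k : ℕ) then 1 else 0)) * c := by
  unfold hopping
  trans ∑ j ∈ Finset.range (L - 1), ((if j = k then c else 0) + (if j + 1 = k then c else 0))
  · refine Finset.sum_congr rfl fun j hj => ?_
    have hj1 : j + 1 < L := by have := Finset.mem_range.mp hj; omega
    rw [dif_pos hj1]
    congr 1
    · by_cases hjk : j = k <;> simp [hψ, hjk, Fin.ext_iff]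
    · by_cases hjk : j + 1 = k
      · have hjk' : j ≠ k := by omega
        simp [hψ, hjk, hjk', Fin.ext_iff]
      · simp [hjk, Fin.ext_iff]
  · have hshift := Finset.sum_range_succ' (fun i => if i = (k : ℕ) then c else 0) (L - 1)
    rw [Nat.sub_add_cancel k.pos, Finset.sum_ite_eq', if_pos (Finset.mem_range.mpr k.isLt)] at hshift
    rw [Finset.sum_add_distrib, Finset.sum_ite_eq']
    simp only [Finset.mem_range]
    split_ifs at hshift ⊢ <;> first | omega | linear_combination -hshift

lemma Hspin_zeroState {L : ℕ} (hL : 2 ≤ L) :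
    Hspin L (zeroState L) = (-((L : ℂ) - 1)) • zeroState L := by
  ext S
  rw [Hspin_apply, sum_siteWeight_mul_zSign hL,
    hopping_eq_zero fun a _ b _ => by simp [zeroState, Finset.insert_ne_empty]]
  by_cases hS : S = ∅ <;> simp [hS, zeroState]

lemma Hspin_Wstate {L : ℕ} (hL : 2 ≤ L) :
    Hspin L (Wstate L) = (-((L : ℂ) - 1)) • Wstate L := by
  ext S
  rw [Hspin_apply, sum_siteWeight_mul_zSign hL]
  by_cases hS : S.card = 1
  · obtain ⟨k, rfl⟩ := Finset.card_eq_one.mp hS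
    have hW (m : Fin L) : Wstate L {m} = ((1 / Real.sqrt L : ℝ) : ℂ) :=
      if_pos (Finset.card_singleton m) (e := 0)
    rw [hopping_singleton hW k, ← two_mul_siteWeight hL, Finset.sum_singleton, PiLp.smul_apply,
      hW, smul_eq_mul]
    ring
  · rw [hopping_eq_zero fun a ha b hb => by simp [Wstate, card_insert_erase ha hb, hS]]
    simp [Wstate, hS]

/-- Both `|0⟩` and `|W⟩` are eigenvectors of `H_L` with the same eigenvalue `-(L-1)`. -/
theorem Hspin_degenerate (L : ℕ) (hL : 2 ≤ L) :
    Hspin L (zeroState L) = (-((L : ℂ) - 1)) • zeroState L ∧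
      Hspin L (Wstate L) = (-((L : ℂ) - 1)) • Wstate L :=
  ⟨Hspin_zeroState hL, Hspin_Wstate hL⟩

end
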